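/- arXiv:1104.3760 — 2 statements merged into one kernel-verified Lean document; each statement's English description precedes it below -/
import Mathlib

section
/- Let α = 1/2 + t with t ∈ (0,1), and let p, q ∈ [0,1]. Suppose a quantity v satisfies v ≤ p·q·α + (1 - p·q)·(1/2) and v ≥ α - t². Then p ≥ 1 - t and q ≥ 1 - t. -/
theorem stmt_0 (t p q v α : ℝ) (ht : t ∈ Set.Ioo (0:ℝ) 1)
    (hα : α = 1/2 + t)
    (hp : p ∈ Set.Icc (0:ℝ) 1) (hq : q ∈ Set.Icc (0:ℝ) 1)
    (hv1 : v ≤ p * q * α + (1 - p * q) * (1/2))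
    (hv2 : v ≥ α - t ^ 2) :
    p ≥ 1 - t ∧ q ≥ 1 - t := by
  obtain ⟨ht0, ht1⟩ := ht
  obtain ⟨hp0, hp1⟩ := hp
  obtain ⟨hq0, hq1⟩ := hq
  subst hα
  have hpq : p * q ≥ 1 - t := by nlinarith
  constructor <;> nlinarith
end

section
/- Every bimatrix game (with payoffs in [0,1]) that has a Nash equilibrium of value v admits a 1/2-approximate Nash equilibrium of value at least v in which one of the two players plays a pure strategy. -/
/-- The payoff of a player with payoff matrix `M` under mixed strategies `x, y`. -/
def payoff7 {n : ℕ} (M : Fin n → Fin n → ℝ) (x y : Fin n → ℝ) : ℝ :=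
  ∑ i, ∑ j, x i * M i j * y j

/-- `x` is a mixed strategy. -/
def IsMixed7 {n : ℕ} (x : Fin n → ℝ) : Prop :=
  (∀ i, 0 ≤ x i) ∧ ∑ i, x i = 1

/-- The pure strategy on the `i`-th action. -/
def pure7 {n : ℕ} (i : Fin n) : Fin n → ℝ :=
  fun k => if k = i then 1 else 0

/-- `(x, y)` is an `ε`-approximate Nash equilibrium of the bimatrix game `(Mr, Mc)`. -/
def IsEpsEq7 {n : ℕ} (Mr Mc : Fin n → Fin n → ℝ) (ε : ℝ) (x y : Fin n → ℝ) : Prop :=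
  (∀ i, payoff7 Mr (pure7 i) y ≤ payoff7 Mr x y + ε) ∧
  (∀ j, payoff7 Mc x (pure7 j) ≤ payoff7 Mc x y + ε)

/-- The value of a strategy pair: the average of the two players' payoffs. -/
noncomputable def value7 {n : ℕ} (Mr Mc : Fin n → Fin n → ℝ) (x y : Fin n → ℝ) : ℝ :=
  (payoff7 Mr x y + payoff7 Mc x y) / 2

/-! Let `(x, y)` be a Nash equilibrium with payoffs `R, C`. Every pure strategy in the support of
an equilibrium strategy is a best response, so there is a column `j` in the support of `y` with
`Mc(x, j) = C` and `Mr(x, j) ≥ R`, and symmetrically a row `i` with `Mr(i, y) = R` and `Mc(i, y) ≥ C`.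
If `(x, j)` is already a `1/2`-equilibrium we are done; otherwise the row player's best response `b`
to `j` gains more than `1/2` over `x`. If `C ≥ 1/2`, then `(i, y)` works, since no
column deviation can gain more than `1 - C ≤ 1/2`. Otherwise `((x + b)/2, j)` is a `1/2`-equilibrium
(the Daskalakis–Mehta–Papadimitriou construction), and the row player's gain of more than `1/4`
outweighs the column player's loss of at most `C/2 < 1/4`. -/

open Finset

section Weights

variable {n : ℕ} {w f : Fin n → ℝ} {c : ℝ}

lemma IsMixed7.sum_mul_lt (hw : IsMixed7 w) (hle : ∀ k, w k ≠ 0 → f k ≤ c)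
    (hlt : ∃ k, w k ≠ 0 ∧ f k < c) : ∑ k, w k * f k < c := by
  obtain ⟨k, hwk, hfk⟩ := hlt
  calc ∑ k, w k * f k < ∑ k, w k * c := by
        refine sum_lt_sum (fun l _ => ?_) ⟨k, mem_univ k, ?_⟩
        · by_cases hwl : w l = 0
          · simp [hwl]
          · exact mul_le_mul_of_nonneg_left (hle l hwl) (hw.1 l)
        · exact mul_lt_mul_of_pos_left hfk (lt_of_le_of_ne (hw.1 k) (Ne.symm hwk))
    _ = c := by rw [← sum_mul, hw.2, one_mul]

lemma IsMixed7.exists_ne_zero_sum_mul_le (hw : IsMixed7 w) (f : Fin n → ℝ) :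
    ∃ k, w k ≠ 0 ∧ ∑ l, w l * f l ≤ f k := by
  by_contra! h
  obtain ⟨k, -, hwk⟩ := exists_ne_zero_of_sum_ne_zero (hw.2.symm ▸ one_ne_zero : ∑ l, w l ≠ 0)
  exact lt_irrefl _ (hw.sum_mul_lt (fun l hwl => (h l hwl).le) ⟨k, hwk, h k hwk⟩)

lemma IsMixed7.eq_sum_mul_of_le (hw : IsMixed7 w) (hf : ∀ l, f l ≤ ∑ l, w l * f l) {k : Fin n}
    (hwk : w k ≠ 0) : f k = ∑ l, w l * f l := by
  by_contra h
  exact lt_irrefl _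
    (hw.sum_mul_lt (fun l _ => hf l) ⟨k, hwk, lt_of_le_of_ne (hf k) h⟩)

end Weights

section Payoff

variable {n : ℕ} (M : Fin n → Fin n → ℝ)

lemma isMixed7_pure7 (i : Fin n) : IsMixed7 (pure7 i) :=
  ⟨fun k => by unfold pure7; split_ifs <;> norm_num, by simp [pure7]⟩

lemma IsMixed7.smul_add_smul {x w : Fin n → ℝ} (hx : IsMixed7 x) (hw : IsMixed7 w) {a b : ℝ}
    (ha : 0 ≤ a) (hb : 0 ≤ b) (hab : a + b = 1) : IsMixed7 (a • x + b • w) := by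
  refine ⟨fun k => ?_, ?_⟩
  · simp only [Pi.add_apply, Pi.smul_apply, smul_eq_mul]
    have := hx.1 k; have := hw.1 k
    positivity
  · simp only [Pi.add_apply, Pi.smul_apply, smul_eq_mul, sum_add_distrib, ← mul_sum, hx.2,
      hw.2]
    linarith

lemma payoff7_eq_sum_left (x y : Fin n → ℝ) :
    payoff7 M x y = ∑ i, x i * payoff7 M (pure7 i) y := by
  simp [payoff7, pure7, ite_mul, mul_sum, mul_assoc]

lemma payoff7_eq_sum_right (x y : Fin n → ℝ) :
    payoff7 M x y = ∑ j, y j * payoff7 M x (pure7 j) := by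
  simp only [payoff7, pure7, mul_ite, mul_one, mul_zero, sum_ite_eq', mem_univ, if_true, mul_sum]
  rw [sum_comm]
  exact sum_congr rfl fun j _ => sum_congr rfl fun i _ => by ring

lemma payoff7_pure7_pure7 (i j : Fin n) : payoff7 M (pure7 i) (pure7 j) = M i j := by
  simp [payoff7, pure7]

lemma payoff7_smul_add_smul_left (x w z : Fin n → ℝ) (a b : ℝ) :
    payoff7 M (a • x + b • w) z = a * payoff7 M x z + b * payoff7 M w z := by
  simp only [payoff7, mul_sum, ← sum_add_distrib, Pi.add_apply, Pi.smul_apply, smul_eq_mul]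
  refine sum_congr rfl fun i _ => sum_congr rfl fun j _ => ?_
  ring

lemma payoff7_nonneg {M : Fin n → Fin n → ℝ} (hM : ∀ i j, 0 ≤ M i j) {x y : Fin n → ℝ}
    (hx : ∀ i, 0 ≤ x i) (hy : ∀ j, 0 ≤ y j) : 0 ≤ payoff7 M x y :=
  sum_nonneg fun i _ => sum_nonneg fun j _ => mul_nonneg (mul_nonneg (hx i) (hM i j)) (hy j)

end Payoff

section Equilibrium

variable {n : ℕ} {Mr Mc : Fin n → Fin n → ℝ} {x y : Fin n → ℝ}

lemma exists_pure7_right_indifferent_ge (A : Fin n → Fin n → ℝ) (hy : IsMixed7 y)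
    (hcol : ∀ j, payoff7 Mc x (pure7 j) ≤ payoff7 Mc x y) :
    ∃ j, payoff7 A x y ≤ payoff7 A x (pure7 j) ∧ payoff7 Mc x (pure7 j) = payoff7 Mc x y := by
  obtain ⟨j, hyj, hA⟩ := hy.exists_ne_zero_sum_mul_le fun j => payoff7 A x (pure7 j)
  refine ⟨j, by rwa [payoff7_eq_sum_right A], ?_⟩
  rw [payoff7_eq_sum_right Mc x y] at hcol ⊢
  exact hy.eq_sum_mul_of_le hcol hyj

lemma exists_pure7_left_indifferent_ge (A : Fin n → Fin n → ℝ) (hx : IsMixed7 x)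
    (hrow : ∀ i, payoff7 Mr (pure7 i) y ≤ payoff7 Mr x y) :
    ∃ i, payoff7 A x y ≤ payoff7 A (pure7 i) y ∧ payoff7 Mr (pure7 i) y = payoff7 Mr x y := by
  obtain ⟨i, hxi, hA⟩ := hx.exists_ne_zero_sum_mul_le fun i => payoff7 A (pure7 i) y
  refine ⟨i, by rwa [payoff7_eq_sum_left A], ?_⟩
  rw [payoff7_eq_sum_left Mr x y] at hrow ⊢
  exact hx.eq_sum_mul_of_le hrow hxi

lemma isEpsEq7_half_midpoint (hMr : ∀ i j, Mr i j ∈ Set.Icc (0:ℝ) 1)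
    (hMc : ∀ i j, Mc i j ∈ Set.Icc (0:ℝ) 1) (hx : IsMixed7 x) {b j : Fin n}
    (hb : ∀ i, payoff7 Mr (pure7 i) (pure7 j) ≤ payoff7 Mr (pure7 b) (pure7 j))
    (hj : ∀ j', payoff7 Mc x (pure7 j') ≤ payoff7 Mc x (pure7 j)) :
    IsEpsEq7 Mr Mc (1/2) ((1/2 : ℝ) • x + (1/2 : ℝ) • pure7 b) (pure7 j) := by
  simp only [IsEpsEq7, payoff7_smul_add_smul_left, payoff7_pure7_pure7] at hb ⊢
  have hxj : 0 ≤ payoff7 Mr x (pure7 j) :=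
    payoff7_nonneg (fun i j => (hMr i j).1) hx.1 (isMixed7_pure7 j).1
  refine ⟨fun i => ?_, fun j' => ?_⟩
  · linarith [hb i, (hMr b j).2]
  · linarith [hj j', (hMc b j').2, (hMc b j).1]

end Equilibrium

theorem stmt_7_general {n : ℕ} (Mr Mc : Fin n → Fin n → ℝ)
    (hMr : ∀ i j, Mr i j ∈ Set.Icc (0:ℝ) 1) (hMc : ∀ i j, Mc i j ∈ Set.Icc (0:ℝ) 1)
    (x y : Fin n → ℝ) (hx : IsMixed7 x) (hy : IsMixed7 y)
    (hNash : IsEpsEq7 Mr Mc 0 x y) :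
    ∃ x' y' : Fin n → ℝ, IsMixed7 x' ∧ IsMixed7 y' ∧ IsEpsEq7 Mr Mc (1/2) x' y' ∧
      value7 Mr Mc x' y' ≥ value7 Mr Mc x y ∧
      ((∃ i, x' = pure7 i) ∨ (∃ j, y' = pure7 j)) := by
  obtain ⟨hrow, hcol⟩ := hNash
  simp only [add_zero] at hrow hcol
  obtain ⟨j, hRj, hCj⟩ := exists_pure7_right_indifferent_ge Mr hy hcol
  obtain ⟨i, hCi, hRi⟩ := exists_pure7_left_indifferent_ge Mc hx hrow
  have : Nonempty (Fin n) := ⟨j⟩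
  obtain ⟨b, hb⟩ := Finite.exists_max fun i => payoff7 Mr (pure7 i) (pure7 j)
  by_cases hAj : payoff7 Mr (pure7 b) (pure7 j) ≤ payoff7 Mr x (pure7 j) + 1/2
  · refine ⟨x, pure7 j, hx, isMixed7_pure7 j, ⟨fun i' => (hb i').trans hAj, fun j' => ?_⟩,
      ?_, Or.inr ⟨j, rfl⟩⟩
    · linarith [hcol j']
    · unfold value7; linarith
  by_cases hC : 1/2 ≤ payoff7 Mc x y
  · refine ⟨pure7 i, y, isMixed7_pure7 i, hy, ⟨fun i' => ?_, fun j' => ?_⟩, ?_, Or.inl ⟨i, rfl⟩⟩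
    · linarith [hrow i']
    · linarith [payoff7_pure7_pure7 Mc i j', (hMc i j').2]
    · unfold value7; linarith
  refine ⟨_, pure7 j, hx.smul_add_smul (isMixed7_pure7 b) (by norm_num) (by norm_num)
    (by norm_num), isMixed7_pure7 j, isEpsEq7_half_midpoint hMr hMc hx hb (fun j' => ?_), ?_,
    Or.inr ⟨j, rfl⟩⟩
  · linarith [hcol j']
  · simp only [value7, payoff7_smul_add_smul_left, payoff7_pure7_pure7] at hAj ⊢
    linarith [(hMc b j).1]

theorem stmt_7 {n : ℕ} (hn : 0 < n) (Mr Mc : Fin n → Fin n → ℝ)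
    (hMr : ∀ i j, Mr i j ∈ Set.Icc (0:ℝ) 1) (hMc : ∀ i j, Mc i j ∈ Set.Icc (0:ℝ) 1)
    (x y : Fin n → ℝ) (hx : IsMixed7 x) (hy : IsMixed7 y)
    (hNash : IsEpsEq7 Mr Mc 0 x y) :
    ∃ x' y' : Fin n → ℝ, IsMixed7 x' ∧ IsMixed7 y' ∧ IsEpsEq7 Mr Mc (1/2) x' y' ∧
      value7 Mr Mc x' y' ≥ value7 Mr Mc x y ∧
      ((∃ i, x' = pure7 i) ∨ (∃ j, y' = pure7 j)) :=
  stmt_7_general Mr Mc hMr hMc x y hx hy hNash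
end
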